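/- Let P ∈ ℝ[X₁,…,Xₙ] be homogeneous of degree k and let s ∈ {0, 1, …, ⌊k/2⌋}. Then F^{s+1} · Δ^{s+1}(P) = ((R∘Δ − b_{k,0}) ∘ (R∘Δ − b_{k,1}) ∘ ⋯ ∘ (R∘Δ − b_{k,s}))(P), where R∘Δ − b_{k,i} denotes the operator Q ↦ F·Δ(Q) − b_{k,i}·Q. (This is the identity R^{s+1}∘T^{s+1} = ∏_{i=0}^{s}(R∘T − b_{k,i}) on degree-k symmetric tensors, in the purely even case r = 0.) -/

import Mathlib

/-!
With the Euler operator `E = ∑ Xᵢ ∂ᵢ` one has `E F = 2F`, `[E, Δ] = -2Δ` and, since `εᵢ² = 1`,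
`Δ(F g) = F Δg + 2n g + 4 E g`. On the eigenspace `E = e` these give, by induction on `m`,
`Δ^{m+1}(F g) = F Δ^{m+1} g + 2(m+1)(n + 2e - 2m) Δ^m g`.
For `E g = k g`, applying this to `Δg` (eigenvalue `k - 2`) with `m = s` produces exactly the
coefficient `b_{k,s+1}`: `Δ^{s+1}(F Δg - b_{k,s+1} g) = F Δ^{s+2} g`. Since `F Δ - b` preserves the
eigenspace `E = k`, which contains the homogeneous polynomials of degree `k` by Euler's identity,
induction on `s` peels off one factor of the product at a time.
-/

open MvPolynomial

/-- Signature: `ε_i = 1` for `i < p` (1-based: `i ≤ p`), `ε_i = -1` otherwise. -/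
noncomputable def sgn (p : ℕ) {n : ℕ} (i : Fin n) : ℝ := if (i : ℕ) < p then 1 else -1

/-- `F = ∑ ε_i X_i²`. -/
noncomputable def Fquad (p q : ℕ) : MvPolynomial (Fin (p + q)) ℝ :=
  ∑ i, C (sgn p i) * X i ^ 2

/-- The Laplacian of signature `(p,q)`: `Δ = ∑ ε_i ∂²/∂X_i²`. -/
noncomputable def lap (p q : ℕ) (P : MvPolynomial (Fin (p + q)) ℝ) :
    MvPolynomial (Fin (p + q)) ℝ :=
  ∑ i, C (sgn p i) * pderiv i (pderiv i P)

/-- `b_{k,s} = 2s(n + 2(k - s - 1))` with `n = p + q`. -/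
noncomputable def bCoef (n k s : ℕ) : ℝ :=
  2 * (s : ℝ) * ((n : ℝ) + 2 * ((k : ℝ) - (s : ℝ) - 1))

/-- The composition `(R∘Δ - b_{k,0}) ∘ (R∘Δ - b_{k,1}) ∘ ⋯ ∘ (R∘Δ - b_{k,s})`,
where `R` is multiplication by `F`. -/
noncomputable def opProd (p q k : ℕ) : ℕ → MvPolynomial (Fin (p + q)) ℝ →
    MvPolynomial (Fin (p + q)) ℝ
  | 0, P => Fquad p q * lap p q P - C (bCoef (p + q) k 0) * P
  | s + 1, P => opProd p q k s (Fquad p q * lap p q P - C (bCoef (p + q) k (s + 1)) * P)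

namespace MvPolynomial

variable {R σ : Type*} [CommRing R] [Fintype σ]

noncomputable def euler : Derivation R (MvPolynomial σ R) (MvPolynomial σ R) :=
  ∑ i : σ, (X i : MvPolynomial σ R) • pderiv i

theorem euler_apply (f : MvPolynomial σ R) : euler f = ∑ i, X i * pderiv i f := by
  rw [euler, ← Derivation.coeFnAddMonoidHom_apply, map_sum, Finset.sum_apply]
  simp only [Derivation.coeFnAddMonoidHom_apply, Derivation.smul_apply, smul_eq_mul]

theorem euler_X (j : σ) : euler (X j : MvPolynomial σ R) = X j := by
  classical
  simp [euler_apply, pderiv_X, Pi.single_apply]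

theorem pderiv_euler (j : σ) (f : MvPolynomial σ R) :
    pderiv j (euler f) = euler (pderiv j f) + pderiv j f := by
  have h : ⁅(pderiv j : Derivation R (MvPolynomial σ R) (MvPolynomial σ R)),
      euler (R := R) (σ := σ)⁆ = pderiv j := by
    classical
    refine derivation_ext fun i => ?_
    rw [Derivation.commutator_apply, euler_X, pderiv_X, Pi.single_apply]
    split_ifs <;> simp
  have := DFunLike.congr_fun h f
  rw [Derivation.commutator_apply] at this
  linear_combination this

theorem pderiv_pderiv_euler (j : σ) (f : MvPolynomial σ R) :
    pderiv j (pderiv j (euler f)) =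
      euler (pderiv j (pderiv j f)) + 2 * pderiv j (pderiv j f) := by
  rw [pderiv_euler, map_add, pderiv_euler]
  ring

theorem euler_C_mul (a : R) (f : MvPolynomial σ R) : euler (C a * f) = C a * euler f := by
  rw [C_mul', C_mul', Derivation.map_smul]

theorem IsHomogeneous.euler_eq {φ : MvPolynomial σ R} {n : ℕ} (h : φ.IsHomogeneous n) :
    euler φ = (n : R) • φ := by
  rw [euler_apply, h.sum_X_mul_pderiv, Nat.cast_smul_eq_nsmul]

noncomputable def quadForm (ε : σ → R) : MvPolynomial σ R :=
  ∑ i, C (ε i) * X i ^ 2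

noncomputable def laplacian (ε : σ → R) : Module.End R (MvPolynomial σ R) :=
  ∑ i, ε i • ((pderiv i).toLinearMap ∘ₗ (pderiv i).toLinearMap)

variable (ε : σ → R)

theorem laplacian_apply (f : MvPolynomial σ R) :
    laplacian ε f = ∑ i, C (ε i) * pderiv i (pderiv i f) := by
  simp [laplacian, LinearMap.sum_apply, C_mul']

theorem euler_laplacian (f : MvPolynomial σ R) :
    euler (laplacian ε f) = laplacian ε (euler f) - (2 : R) • laplacian ε f := by
  simp only [laplacian_apply, map_sum, euler_C_mul, pderiv_pderiv_euler, Finset.mul_sum,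
    ← Finset.sum_sub_distrib, smul_eq_C_mul, map_ofNat]
  refine Finset.sum_congr rfl fun i _ => ?_
  ring

theorem pderiv_quadForm (i : σ) : pderiv i (quadForm ε) = C (2 * ε i) * X i := by
  rw [quadForm, map_sum, Finset.sum_eq_single i (fun j _ hj => by simp [pderiv_X_of_ne hj])
    (by simp)]
  simp only [pderiv_C_mul, pderiv_pow, pderiv_X_self, map_mul, map_ofNat]
  ring

theorem euler_quadForm : euler (quadForm ε) = (2 : R) • quadForm ε := by
  simp only [euler_apply, pderiv_quadForm, smul_eq_C_mul, map_ofNat]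
  rw [quadForm, Finset.mul_sum]
  refine Finset.sum_congr rfl fun i _ => ?_
  rw [map_mul, map_ofNat]
  ring

theorem laplacian_quadForm_mul (hε : ∀ i, ε i * ε i = 1) (g : MvPolynomial σ R) :
    laplacian ε (quadForm ε * g) =
      quadForm ε * laplacian ε g + (2 * Fintype.card σ : R) • g + (4 : R) • euler g := by
  have term (i : σ) : C (ε i) * pderiv i (pderiv i (quadForm ε * g)) =
      2 * g + 4 * (X i * pderiv i g) + quadForm ε * (C (ε i) * pderiv i (pderiv i g)) := by
    have hC : C (ε i) * C (ε i) = (1 : MvPolynomial σ R) := by rw [← map_mul, hε, map_one]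
    simp only [pderiv_mul, map_add, pderiv_quadForm, pderiv_C, pderiv_X_self, zero_mul, zero_add]
    rw [map_mul, map_ofNat]
    linear_combination (2 * g + 4 * (X i * pderiv i g)) * hC
  simp only [laplacian_apply, term, Finset.sum_add_distrib, ← Finset.mul_sum, euler_apply,
    Finset.sum_const, Finset.card_univ, nsmul_eq_mul, smul_eq_C_mul, map_mul, map_natCast,
    map_ofNat]
  ring

variable {ε}

theorem euler_laplacian_of_euler_eq_smul {g : MvPolynomial σ R} {e : R} (hg : euler g = e • g) :
    euler (laplacian ε g) = (e - 2) • laplacian ε g := by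
  rw [euler_laplacian, hg, map_smul, sub_smul]

theorem laplacian_pow_succ_quadForm_mul (hε : ∀ i, ε i * ε i = 1) {g : MvPolynomial σ R}
    {e : R} (hg : euler g = e • g) (m : ℕ) :
    (laplacian ε ^ (m + 1)) (quadForm ε * g) = quadForm ε * (laplacian ε ^ (m + 1)) g
      + (2 * (m + 1) * (Fintype.card σ + 2 * e - 2 * m) : R) • (laplacian ε ^ m) g := by
  induction m generalizing g e with
  | zero =>
    rw [pow_one, pow_zero, Module.End.one_apply, laplacian_quadForm_mul ε hε, hg, smul_smul,
      add_assoc, ← add_smul]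
    congr 2
    push_cast
    ring
  | succ m ih =>
    rw [pow_succ, Module.End.mul_apply, laplacian_quadForm_mul ε hε, hg, smul_smul, add_assoc,
      ← add_smul, map_add, map_smul, ih (euler_laplacian_of_euler_eq_smul hg),
      pow_succ (laplacian ε) m]
    simp only [Module.End.mul_apply]
    rw [add_assoc, ← add_smul]
    congr 2
    push_cast
    ring

theorem laplacian_pow_succ_quadForm_mul_laplacian_sub (hε : ∀ i, ε i * ε i = 1)
    {g : MvPolynomial σ R} {e : R} (hg : euler g = e • g) (s : ℕ) :
    (laplacian ε ^ (s + 1)) (quadForm ε * laplacian ε g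
        - (2 * (s + 1) * (Fintype.card σ + 2 * (e - 2) - 2 * s) : R) • g) =
      quadForm ε * (laplacian ε ^ (s + 2)) g := by
  rw [map_sub, map_smul,
    laplacian_pow_succ_quadForm_mul hε (euler_laplacian_of_euler_eq_smul hg),
    ← Module.End.mul_apply, ← pow_succ, ← Module.End.mul_apply, ← pow_succ]
  abel

theorem euler_quadForm_mul_laplacian_sub {g : MvPolynomial σ R} {e : R} (hg : euler g = e • g)
    (c : R) :
    euler (quadForm ε * laplacian ε g - c • g) = e • (quadForm ε * laplacian ε g - c • g) := by
  rw [map_sub, Derivation.leibniz, euler_quadForm, euler_laplacian_of_euler_eq_smul hg,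
    Derivation.map_smul, hg]
  simp only [smul_eq_mul, smul_eq_C_mul, map_sub, map_ofNat]
  ring

end MvPolynomial

theorem sgn_mul_self (p : ℕ) {n : ℕ} (i : Fin n) : sgn p i * sgn p i = 1 := by
  unfold sgn
  split_ifs <;> norm_num

theorem Fquad_eq_quadForm (p q : ℕ) : Fquad p q = quadForm (sgn p) := rfl

theorem lap_eq_laplacian (p q : ℕ) : lap p q = laplacian (sgn p) := by
  funext P
  rw [laplacian_apply]
  rfl

theorem lap_iterate (p q m : ℕ) : (lap p q)^[m] = ⇑(laplacian (sgn p) ^ m) := by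
  rw [lap_eq_laplacian, Module.End.coe_pow]

theorem bCoef_succ (n k s : ℕ) :
    bCoef n k (s + 1) =
      2 * (s + 1) * (Fintype.card (Fin n) + 2 * ((k : ℝ) - 2) - 2 * s) := by
  simp only [bCoef, Fintype.card_fin]
  push_cast
  ring

theorem pow_mul_lap_iterate_of_euler_eq (p q k : ℕ) {P : MvPolynomial (Fin (p + q)) ℝ}
    (hP : euler P = (k : ℝ) • P) (s : ℕ) :
    Fquad p q ^ (s + 1) * (lap p q)^[s + 1] P = opProd p q k s P := by
  induction s generalizing P with
  | zero => simp [opProd, bCoef]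
  | succ s ih =>
    set Q := Fquad p q * lap p q P - C (bCoef (p + q) k (s + 1)) * P with hQ_def
    have hQ : euler Q = (k : ℝ) • Q := by
      rw [hQ_def, C_mul', Fquad_eq_quadForm, lap_eq_laplacian]
      exact euler_quadForm_mul_laplacian_sub hP _
    have hΔQ : (lap p q)^[s + 1] Q = Fquad p q * (lap p q)^[s + 2] P := by
      rw [hQ_def, C_mul', bCoef_succ, Fquad_eq_quadForm, lap_iterate, lap_iterate,
        lap_eq_laplacian]
      exact laplacian_pow_succ_quadForm_mul_laplacian_sub (sgn_mul_self p) hP s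
    calc Fquad p q ^ (s + 2) * (lap p q)^[s + 2] P
        = Fquad p q ^ (s + 1) * (Fquad p q * (lap p q)^[s + 2] P) := by ring
      _ = Fquad p q ^ (s + 1) * (lap p q)^[s + 1] Q := by rw [hΔQ]
      _ = opProd p q k (s + 1) P := ih hQ

theorem pow_mul_lap_iterate_general (p q : ℕ) (k s : ℕ)
    (P : MvPolynomial (Fin (p + q)) ℝ) (hP : P.IsHomogeneous k) :
    Fquad p q ^ (s + 1) * (lap p q)^[s + 1] P = opProd p q k s P :=
  pow_mul_lap_iterate_of_euler_eq p q k hP.euler_eq s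

/-- For `P` homogeneous of degree `k` and `0 ≤ s ≤ ⌊k/2⌋`:
`F^{s+1}·Δ^{s+1}(P) = ∏_{i=0}^{s} (R∘Δ - b_{k,i}) (P)`. -/
theorem pow_mul_lap_iterate (p q : ℕ) (hn : 1 ≤ p + q) (k s : ℕ) (hs : s ≤ k / 2)
    (P : MvPolynomial (Fin (p + q)) ℝ) (hP : P.IsHomogeneous k) :
    Fquad p q ^ (s + 1) * (lap p q)^[s + 1] P = opProd p q k s P :=
  pow_mul_lap_iterate_general p q k s P hP
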